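/- arXiv:2007.11518 — 2 statements merged into one kernel-verified Lean document; each statement's English description precedes it below -/
import Mathlib

section
/- Let A be a 2×2 integer matrix with determinant 1 and trace > 2, and let 𝒳, 𝒴 ⊆ 𝕋² be disjoint nonempty finite f_A-invariant sets. If every positive 𝒳-rectangle contains a point of the lift 𝒴̃, then there exists a negative 𝒴-rectangle disjoint from the lift 𝒳̃. -/
/- Common setup: following the paper, we identify each subset of the torus
`𝕋² = ℝ²/ℤ²` with its (`ℤ²`-saturated) lift to `ℝ²`. -/

open Matrix Set
open scoped Pointwise

namespace Paper

/-- Points of the plane ℝ². -/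
abbrev V : Type := Fin 2 → ℝ

/-- The integer lattice ℤ² ⊆ ℝ². -/
def lattice : Set V := Set.range fun m : Fin 2 → ℤ => fun i => (m i : ℝ)

/-- The linear action of an integer matrix on ℝ². -/
def actR (A : Matrix (Fin 2) (Fin 2) ℤ) (v : V) : V :=
  (A.map (Int.cast : ℤ → ℝ)).mulVec v

/-- `E ⊆ ℝ²` is the lift of a finite subset of the torus. -/
def IsTorusFinite (E : Set V) : Prop := ∃ F : Set V, F.Finite ∧ E = F + lattice

/-- `E` is the lift of an `f_A`-invariant subset of the torus. -/
def IsInvariant (A : Matrix (Fin 2) (Fin 2) ℤ) (E : Set V) : Prop := actR A '' E = E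

/-- `E` is the lift of a periodic orbit of `f_A`. -/
def IsPeriodicOrbit (A : Matrix (Fin 2) (Fin 2) ℤ) (E : Set V) : Prop :=
  ∃ x : V, ∃ p : ℕ, 0 < p ∧ (actR A)^[p] x - x ∈ lattice ∧
    E = {v | ∃ i : ℕ, v - (actR A)^[i] x ∈ lattice}

/-- A rectangle `R(p; s, u)`, recorded via its basepoint `p` and its side
lengths `s, u > 0` (in the directions of the fixed eigenvectors `v^s, v^u`). -/
structure Rect where
  p : V
  s : ℝ
  u : ℝ
  s_pos : 0 < s
  u_pos : 0 < u

namespace Rect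

/-- The set of points of the rectangle `R(p;s,u)`. -/
def carrier (vs vu : V) (R : Rect) : Set V :=
  {q | ∃ a b : ℝ, 0 ≤ a ∧ a ≤ R.s ∧ 0 ≤ b ∧ b ≤ R.u ∧ q = R.p + a • vs + b • vu}

/-- Endpoint of the increasing diagonal (whose origin is `R.p`). -/
def incEnd (vs vu : V) (R : Rect) : V := R.p + R.s • vs + R.u • vu

/-- Origin of the decreasing diagonal. -/
def decOrigin (vs : V) (R : Rect) : V := R.p + R.s • vs

/-- Endpoint of the decreasing diagonal. -/
def decEnd (vu : V) (R : Rect) : V := R.p + R.u • vu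

/-- `R` is a positive `E`-rectangle. -/
def IsPos (vs vu : V) (E : Set V) (R : Rect) : Prop :=
  R.p ∈ E ∧ R.incEnd vs vu ∈ E

/-- `R` is a negative `E`-rectangle. -/
def IsNeg (vs vu : V) (E : Set V) (R : Rect) : Prop :=
  R.decOrigin vs ∈ E ∧ R.decEnd vu ∈ E

/-- `R` is a primitive positive `E`-rectangle. -/
def IsPrimPos (vs vu : V) (E : Set V) (R : Rect) : Prop :=
  R.IsPos vs vu E ∧ R.carrier vs vu ∩ E = {R.p, R.incEnd vs vu}

/-- `R` is a primitive negative `E`-rectangle. -/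
def IsPrimNeg (vs vu : V) (E : Set V) (R : Rect) : Prop :=
  R.IsNeg vs vu E ∧ R.carrier vs vu ∩ E = {R.decOrigin vs, R.decEnd vu}

/-- Bottom stable side of a rectangle. -/
def botSide (vs : V) (R : Rect) : Set V :=
  {q | ∃ a : ℝ, 0 ≤ a ∧ a ≤ R.s ∧ q = R.p + a • vs}

/-- Top stable side of a rectangle. -/
def topSide (vs vu : V) (R : Rect) : Set V :=
  {q | ∃ a : ℝ, 0 ≤ a ∧ a ≤ R.s ∧ q = R.p + a • vs + R.u • vu}

/-- Left unstable side of a rectangle. -/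
def leftSide (vu : V) (R : Rect) : Set V :=
  {q | ∃ b : ℝ, 0 ≤ b ∧ b ≤ R.u ∧ q = R.p + b • vu}

/-- Interior of a rectangle. -/
def interior (vs vu : V) (R : Rect) : Set V :=
  {q | ∃ a b : ℝ, 0 < a ∧ a < R.s ∧ 0 < b ∧ b < R.u ∧ q = R.p + a • vs + b • vu}

end Rect

/-- The (closed) quadrant `C₊₊(x)`. -/
def quadPP (vs vu x : V) : Set V :=
  {q | ∃ a b : ℝ, 0 ≤ a ∧ 0 ≤ b ∧ q = x + a • vs + b • vu}

/-- `D` is a right horizontal subrectangle of `R`. -/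
def IsRightHorizSub (vs : V) (D R : Rect) : Prop :=
  D.s ≤ R.s ∧ D.u = R.u ∧ D.p = R.p + (R.s - D.s) • vs

/-- A positive `X`-string with origin `x`: a sequence of positive `X`-rectangles,
the first one having `x` as origin of its increasing diagonal, consecutive ones
meeting exactly at one point which is the endpoint of the increasing diagonal of
the former and the origin of the increasing diagonal of the latter. -/
def IsPosString (vs vu : V) (X : Set V) (x : V) (R : ℕ → Rect) : Prop :=
  (∀ i, (R i).IsPos vs vu X) ∧ (R 0).p = x ∧
    ∀ i, (R i).carrier vs vu ∩ (R (i + 1)).carrier vs vu = {(R i).incEnd vs vu} ∧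
      (R (i + 1)).p = (R i).incEnd vs vu

/-- A positive `X`-staircase with origin `x`. -/
def IsPosStaircase (vs vu : V) (X : Set V) (x : V) (R : ℕ → Rect) : Prop :=
  (∀ i, (R i).carrier vs vu ⊆ quadPP vs vu x) ∧
    ∃ Del : ℕ → Rect, IsPosString vs vu X x Del ∧ R 0 = Del 0 ∧
      (∀ i, 1 ≤ i → IsRightHorizSub vs (Del i) (R i)) ∧
      (∀ i, (R i).topSide vs vu ⊆ (R (i + 1)).botSide vs) ∧
      ∃ C : ℝ, ∀ i, (Del (i + 1)).s / (Del i).s ≤ C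

/-- Stable side lengths of the primitive positive `(X, x)`-rectangles. -/
def baseLengths (vs vu : V) (X : Set V) (x : V) : Set ℝ :=
  {s | ∃ R : Rect, R.IsPrimPos vs vu X ∧ R.p = x ∧ R.s = s}

/-- The Euclidean norm of a point of ℝ². -/
noncomputable def euclNorm (v : V) : ℝ := Real.sqrt ((v 0) ^ 2 + (v 1) ^ 2)

/-- `Y` is the lift of an `ε`-dense subset of the torus, for the metric on the
torus induced by the Euclidean metric of ℝ². -/
def EDense (ε : ℝ) (Y : Set V) : Prop := ∀ v : V, ∃ y ∈ Y, euclNorm (v - y) ≤ ε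

/-- The lift of `{(0,1/2), (1/2,0), (1/2,1/2)}`, i.e. the set
`{(0,1/2), (1/2,0), (1/2,1/2)} + ℤ²`. -/
def halfPoints : Set V :=
  {v : V | ∃ w ∈ ({![0, 1/2], ![1/2, 0], ![1/2, 1/2]} : Set V), v - w ∈ lattice}

/-- The lift of the point `(1/2,1/2)` of the torus, i.e. `(1/2,1/2) + ℤ²`. -/
def halfCenter : Set V := {v : V | v - ![1/2, 1/2] ∈ lattice}

/-!
Work in the coordinates `frame` adapted to the eigenbasis `(vs, vu)`, in which `A` acts by
`(a, b) ↦ (λ⁻¹ a, λ b)`. Since the lifts are uniformly discrete and `A`-invariant, two distinct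
points of `𝒳̃ ∪ 𝒴̃` never share a coordinate (iterating `A` or `A⁻¹` would otherwise produce
infinitely many distinct short differences), and `A`-iterates of a lattice vector give
translations of `𝒳̃` with arbitrarily small positive stable and positive unstable coordinate.

Suppose every negative `𝒴`-rectangle met `𝒳̃`. Take a negative `𝒴`-pair `(yN, yS)` whose open box
contains no point of `𝒴̃`, the rightmost point `xm` of `𝒳̃` in that box, and the lowest point `yh`
of `𝒴̃` above `yN` in the vertical strip between `xm` and `yS` (it exists by a thin translate of
`xm`). The negative rectangle spanned by `yh` and `yS` contains a point of `𝒳̃`; below `yN` it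
would lie to the right of `xm` in the first box, above `yN` the positive rectangle it spans with
`xm` would contain a point of `𝒴̃` lower than `yh`.
-/

open Bornology Function Metric

section Planar

variable {X Y : Set (ℝ × ℝ)}

lemma exists_lowest_in_strip (hY : ∀ K, IsBounded K → (Y ∩ K).Finite) {a₁ a₂ b : ℝ}
    {y₀ : ℝ × ℝ} (hy₀ : y₀ ∈ Y) (h₁ : y₀.1 ∈ Ioo a₁ a₂) (h₂ : b < y₀.2) :
    ∃ y ∈ Y, y.1 ∈ Ioo a₁ a₂ ∧ b < y.2 ∧
      ∀ z ∈ Y, z.1 ∈ Ioo a₁ a₂ → b < z.2 → y.2 ≤ z.2 := by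
  obtain ⟨y, ⟨hy, hy₁, hy₂⟩, hmin⟩ := exists_min_image _ Prod.snd
    (hY (Ioo a₁ a₂ ×ˢ Ioc b y₀.2) ((isBounded_Ioo _ _).prod (isBounded_Ioc _ _)))
    ⟨y₀, hy₀, h₁, h₂, le_rfl⟩
  refine ⟨y, hy, hy₁, hy₂.1, fun z hz hz₁ hz₂ => ?_⟩
  rcases le_or_gt z.2 y₀.2 with hz₀ | hz₀
  · exact hmin z ⟨hz, hz₁, hz₂, hz₀⟩
  · exact hy₂.2.trans hz₀.le

lemma exists_neg_pair_inter_eq_empty (hY : ∀ K, IsBounded K → (Y ∩ K).Finite) {y₁ y₂ : ℝ × ℝ}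
    (hy₂ : y₂ ∈ Y) (h₁ : y₁.1 < y₂.1) (h₂ : y₂.2 < y₁.2) :
    ∃ z ∈ Y, y₁.1 < z.1 ∧ z.2 < y₁.2 ∧ Y ∩ Ioo y₁.1 z.1 ×ˢ Ioo z.2 y₁.2 = ∅ := by
  obtain ⟨z, ⟨hz, hz₁, hz₂⟩, hmin⟩ := exists_min_image _ Prod.fst
    (hY (Ioc y₁.1 y₂.1 ×ˢ Ico y₂.2 y₁.2) ((isBounded_Ioc _ _).prod (isBounded_Ico _ _)))
    ⟨y₂, hy₂, ⟨h₁, le_rfl⟩, le_rfl, h₂⟩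
  refine ⟨z, hz, hz₁.1, hz₂.2, eq_empty_of_forall_notMem fun y ⟨hy, hy₁, hy₂⟩ => ?_⟩
  exact (hmin y ⟨hy, ⟨hy₁.1, hy₁.2.le.trans hz₁.2⟩, hz₂.1.trans hy₂.1.le, hy₂.2⟩).not_gt hy₁.2

theorem false_of_empty_neg_box (hXY : Disjoint X Y) (hsnd : InjOn Prod.snd (X ∪ Y))
    (hX : ∀ K, IsBounded K → (X ∩ K).Finite) (hY : ∀ K, IsBounded K → (Y ∩ K).Finite)
    (hthin : ∀ x ∈ X, ∀ δ > 0, ∃ x' ∈ X, x.1 < x'.1 ∧ x'.1 < x.1 + δ ∧ x.2 < x'.2)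
    (hpos : ∀ x₁ ∈ X, ∀ x₂ ∈ X, x₁.1 < x₂.1 → x₁.2 < x₂.2 →
      (Y ∩ Ioo x₁.1 x₂.1 ×ˢ Ioo x₁.2 x₂.2).Nonempty)
    (hneg : ∀ y₁ ∈ Y, ∀ y₂ ∈ Y, y₁.1 < y₂.1 → y₂.2 < y₁.2 →
      (X ∩ Ioo y₁.1 y₂.1 ×ˢ Ioo y₂.2 y₁.2).Nonempty)
    {yN yS : ℝ × ℝ} (hyN : yN ∈ Y) (hyS : yS ∈ Y) (h₁ : yN.1 < yS.1) (h₂ : yS.2 < yN.2)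
    (hempty : Y ∩ Ioo yN.1 yS.1 ×ˢ Ioo yS.2 yN.2 = ∅) : False := by
  have above : ∀ y ∈ Y, yN.1 < y.1 → y.1 < yS.1 → yS.2 < y.2 → yN.2 < y.2 := by
    intro y hy hy₁ hy₁' hy₂
    refine lt_of_le_of_ne (not_lt.1 fun hy₂' => hempty.subset ⟨hy, ⟨hy₁, hy₁'⟩, hy₂, hy₂'⟩) ?_
    exact fun h => hy₁.ne (congrArg Prod.fst (hsnd (Or.inr hyN) (Or.inr hy) h))
  obtain ⟨xm, ⟨hxm, ⟨hxmN, hxmS⟩, hxmS', hxmN'⟩, hmax⟩ := exists_max_image _ Prod.fst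
    (hX _ ((isBounded_Ioo _ _).prod (isBounded_Ioo _ _))) (hneg yN hyN yS hyS h₁ h₂)
  obtain ⟨x₂, hx₂, hxm₂, hx₂S, hxm₂'⟩ := hthin xm hxm (yS.1 - xm.1) (sub_pos.2 hxmS)
  obtain ⟨ys, hys, ⟨hxmys, hysx₂⟩, hxmys', -⟩ := hpos xm hxm x₂ hx₂ hxm₂ hxm₂'
  obtain ⟨yh, hyh, ⟨hxmyh, hyhS⟩, hNyh, hlow⟩ := exists_lowest_in_strip hY hys
    (a₁ := xm.1) (a₂ := yS.1) (b := yN.2) ⟨hxmys, by linarith⟩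
    (above ys hys (by linarith) (by linarith) (by linarith))
  obtain ⟨x', hx', ⟨hyhx', hx'S⟩, hSx', hx'yh⟩ := hneg yh hyh yS hyS hyhS (by linarith)
  rcases lt_trichotomy x'.2 yN.2 with hx'N | hx'N | hNx'
  · linarith [hmax x' ⟨hx', ⟨by linarith, hx'S⟩, hSx', hx'N⟩]
  · exact hXY.ne_of_mem hx' hyN (hsnd (Or.inl hx') (Or.inr hyN) hx'N)
  · obtain ⟨yt, hyt, ⟨hxmyt, hytx'⟩, hxmyt', hytx''⟩ :=
      hpos xm hxm x' hx' (by linarith) (by linarith)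
    linarith [hlow yt hyt ⟨hxmyt, by linarith⟩
      (above yt hyt (by linarith) (by linarith) (by linarith))]

lemma mem_Ioo_of_mem_Icc_of_injOn {α : Type*} {f : α → ℝ} {s : Set α} (hf : InjOn f s)
    {p q z : α} (hp : p ∈ s) (hq : q ∈ s) (hz : z ∈ s) (hzp : z ≠ p) (hzq : z ≠ q)
    (h : f z ∈ Icc (f p) (f q)) : f z ∈ Ioo (f p) (f q) :=
  ⟨h.1.lt_of_ne (hf.ne hp hz hzp.symm), h.2.lt_of_ne (hf.ne hz hq hzq)⟩

theorem false_of_forall_pos_forall_neg (hXY : Disjoint X Y) (hfst : InjOn Prod.fst (X ∪ Y))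
    (hsnd : InjOn Prod.snd (X ∪ Y)) (hX : ∀ K, IsBounded K → (X ∩ K).Finite)
    (hY : ∀ K, IsBounded K → (Y ∩ K).Finite)
    (hthin : ∀ x ∈ X, ∀ δ > 0, ∃ x' ∈ X, x.1 < x'.1 ∧ x'.1 < x.1 + δ ∧ x.2 < x'.2)
    (hpos : ∀ x₁ ∈ X, ∀ x₂ ∈ X, x₁.1 < x₂.1 → x₁.2 < x₂.2 →
      (Y ∩ Icc x₁.1 x₂.1 ×ˢ Icc x₁.2 x₂.2).Nonempty)
    (hneg : ∀ y₁ ∈ Y, ∀ y₂ ∈ Y, y₁.1 < y₂.1 → y₂.2 < y₁.2 →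
      (X ∩ Icc y₁.1 y₂.1 ×ˢ Icc y₂.2 y₁.2).Nonempty)
    (hY₀ : ∃ y₁ ∈ Y, ∃ y₂ ∈ Y, y₁.1 < y₂.1 ∧ y₂.2 < y₁.2) : False := by
  obtain ⟨y₁, hy₁, y₂, hy₂, h₁, h₂⟩ := hY₀
  obtain ⟨z, hz, hz₁, hz₂, hempty⟩ := exists_neg_pair_inter_eq_empty hY hy₂ h₁ h₂
  refine false_of_empty_neg_box hXY hsnd hX hY hthin ?_ ?_ hy₁ hz hz₁ hz₂ hempty
  · intro x₁ hx₁ x₂ hx₂ h₁ h₂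
    obtain ⟨y, hy, hy₁, hy₂⟩ := hpos x₁ hx₁ x₂ hx₂ h₁ h₂
    have hne₁ := (hXY.ne_of_mem hx₁ hy).symm
    have hne₂ := (hXY.ne_of_mem hx₂ hy).symm
    exact ⟨y, hy, mem_Ioo_of_mem_Icc_of_injOn hfst (.inl hx₁) (.inl hx₂) (.inr hy) hne₁ hne₂ hy₁,
      mem_Ioo_of_mem_Icc_of_injOn hsnd (.inl hx₁) (.inl hx₂) (.inr hy) hne₁ hne₂ hy₂⟩
  · intro y₁ hy₁ y₂ hy₂ h₁ h₂
    obtain ⟨x, hx, hx₁, hx₂⟩ := hneg y₁ hy₁ y₂ hy₂ h₁ h₂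
    have hne₁ := hXY.ne_of_mem hx hy₁
    have hne₂ := hXY.ne_of_mem hx hy₂
    exact ⟨x, hx, mem_Ioo_of_mem_Icc_of_injOn hfst (.inr hy₁) (.inr hy₂) (.inl hx) hne₁ hne₂ hx₁,
      mem_Ioo_of_mem_Icc_of_injOn hsnd (.inr hy₂) (.inr hy₁) (.inl hx) hne₂ hne₁ hx₂⟩

end Planar

lemma add_mem_lattice {m n : V} (hm : m ∈ lattice) (hn : n ∈ lattice) : m + n ∈ lattice := by
  obtain ⟨a, rfl⟩ := hm
  obtain ⟨b, rfl⟩ := hn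
  exact ⟨a + b, by ext; simp⟩

lemma lattice_sub_lattice : lattice - lattice = lattice := by
  refine Subset.antisymm ?_ fun m hm => ⟨m, hm, 0, ⟨0, by ext; simp⟩, sub_zero m⟩
  rintro _ ⟨_, ⟨a, rfl⟩, _, ⟨b, rfl⟩, rfl⟩
  exact ⟨a - b, by ext; simp⟩

lemma mapsTo_actR_lattice (A : Matrix (Fin 2) (Fin 2) ℤ) : MapsTo (actR A) lattice lattice := by
  rintro _ ⟨a, rfl⟩
  exact ⟨A *ᵥ a, by ext; simp [actR, mulVec, dotProduct]⟩

lemma exists_mem_lattice_norm_sub_le_one (w : V) : ∃ m ∈ lattice, ‖m - w‖ ≤ 1 := by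
  refine ⟨fun i => (⌊w i⌋ : ℝ), ⟨fun i => ⌊w i⌋, rfl⟩,
    (pi_norm_le_iff_of_nonneg zero_le_one).2 fun i => ?_⟩
  rw [Pi.sub_apply, Real.norm_eq_abs, abs_sub_comm, Int.self_sub_floor,
    abs_of_nonneg (Int.fract_nonneg _)]
  exact (Int.fract_lt_one _).le

lemma finite_lattice_inter {K : Set V} (hK : IsBounded K) : (lattice ∩ K).Finite := by
  obtain ⟨R, hR⟩ := hK.exists_norm_le
  let N : ℤ := ⌈R⌉
  refine ((Set.Finite.pi (t := fun _ : Fin 2 => Icc (-N) N) fun _ => finite_Icc _ _).image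
    fun (m : Fin 2 → ℤ) i => (m i : ℝ)).subset ?_
  rintro _ ⟨⟨m, rfl⟩, hmK⟩
  refine ⟨m, fun i _ => ?_, rfl⟩
  have hmi : |(m i : ℝ)| ≤ N := ((norm_le_pi_norm _ i).trans (hR _ hmK)).trans (Int.le_ceil R)
  exact ⟨by exact_mod_cast (abs_le.1 hmi).1, by exact_mod_cast (abs_le.1 hmi).2⟩

lemma IsTorusFinite.add_mem {E : Set V} (hE : IsTorusFinite E) {x m : V} (hx : x ∈ E)
    (hm : m ∈ lattice) : x + m ∈ E := by
  obtain ⟨F, -, rfl⟩ := hE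
  obtain ⟨f, hf, l, hl, rfl⟩ := hx
  exact ⟨f, hf, l + m, add_mem_lattice hl hm, (add_assoc f l m).symm⟩

lemma IsTorusFinite.union {E E' : Set V} (hE : IsTorusFinite E) (hE' : IsTorusFinite E') :
    IsTorusFinite (E ∪ E') := by
  obtain ⟨F, hF, rfl⟩ := hE
  obtain ⟨F', hF', rfl⟩ := hE'
  exact ⟨F ∪ F', hF.union hF', union_add.symm⟩

lemma IsTorusFinite.sub_self {E : Set V} (hE : IsTorusFinite E) : IsTorusFinite (E - E) := by
  obtain ⟨F, hF, rfl⟩ := hE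
  exact ⟨F - F, hF.sub hF, by rw [add_sub_add_comm, lattice_sub_lattice]⟩

lemma IsTorusFinite.finite_inter {E K : Set V} (hE : IsTorusFinite E) (hK : IsBounded K) :
    (E ∩ K).Finite := by
  obtain ⟨F, hF, rfl⟩ := hE
  refine (hF.add (finite_lattice_inter (hK.sub hF.isBounded))).subset ?_
  rintro _ ⟨⟨f, hf, l, hl, rfl⟩, hK'⟩
  exact ⟨f, hf, l, ⟨hl, f + l, hK', f, hf, add_sub_cancel_left f l⟩, rfl⟩

lemma eq_zero_of_mapsTo_of_apply_eq_smul {E : Type*} [NormedAddCommGroup E] [NormedSpace ℝ E]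
    {D : Set E} (hD : ∀ K, IsBounded K → (D ∩ K).Finite) {f : E →ₗ[ℝ] E} (hf : MapsTo f D D)
    {μ : ℝ} (hμ₀ : 0 < μ) (hμ₁ : μ < 1) {v : E} (hv : v ∈ D) (hfv : f v = μ • v) : v = 0 := by
  by_contra hv₀
  have hiter : ∀ n, f^[n] v = μ ^ n • v := fun n => by
    induction n with
    | zero => simp
    | succ n ih => rw [iterate_succ_apply', ih, map_smul, hfv, smul_smul, pow_succ]
  have hinj : Injective fun n : ℕ => μ ^ n • v :=
    (smul_left_injective ℝ hv₀).comp (pow_right_injective₀ hμ₀ hμ₁.ne)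
  refine infinite_range_of_injective hinj ((hD (closedBall 0 ‖v‖) isBounded_closedBall).subset ?_)
  rintro _ ⟨n, rfl⟩
  refine ⟨by simpa only [hiter] using hf.iterate n hv, mem_closedBall_zero_iff.2 ?_⟩
  rw [norm_smul, Real.norm_of_nonneg (pow_nonneg hμ₀.le n)]
  exact mul_le_of_le_one_left (norm_nonneg v) (pow_le_one₀ hμ₀.le hμ₁.le)

lemma IsTorusFinite.eq_of_sub_eq_smul {E : Set V} (hE : IsTorusFinite E) {f : V →ₗ[ℝ] V}
    (hf : MapsTo f E E) {μ : ℝ} (hμ₀ : 0 < μ) (hμ₁ : μ < 1) {v : V} (hv : f v = μ • v) {p q : V}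
    (hp : p ∈ E) (hq : q ∈ E) {c : ℝ} (hpq : p - q = c • v) : p = q := by
  have hfD : MapsTo f (E - E) (E - E) := by
    rintro _ ⟨x, hx, y, hy, rfl⟩
    exact ⟨f x, hf hx, f y, hf hy, (map_sub f x y).symm⟩
  refine sub_eq_zero.1 (hpq ▸ eq_zero_of_mapsTo_of_apply_eq_smul
    (fun K hK => hE.sub_self.finite_inter hK) hfD hμ₀ hμ₁ (hpq ▸ ⟨p, hp, q, hq, rfl⟩) ?_)
  rw [map_smul, hv, smul_comm]

lemma IsTorusFinite.finite_preimage_inter {F : Type*} [NormedAddCommGroup F] [NormedSpace ℝ F]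
    {E : Set V} (hE : IsTorusFinite E) (e : F ≃L[ℝ] V) {K : Set F} (hK : IsBounded K) :
    (e ⁻¹' E ∩ K).Finite :=
  ((hE.finite_inter (e.lipschitz.isBounded_image hK)).preimage e.injective.injOn).subset
    fun c hc => ⟨hc.1, c, hc.2, rfl⟩

lemma exists_mem_lattice_of_isOpen_of_smul_mem {U : Set V} (hU : IsOpen U)
    (hcone : ∀ t : ℝ, 0 < t → ∀ v ∈ U, t • v ∈ U) (hne : U.Nonempty) : ∃ m ∈ lattice, m ∈ U := by
  obtain ⟨w, hw⟩ := hne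
  obtain ⟨ε, hε, hball⟩ := Metric.isOpen_iff.1 hU w hw
  obtain ⟨m, hm, hmw⟩ := exists_mem_lattice_norm_sub_le_one ((2 / ε) • w)
  refine ⟨m, hm, ?_⟩
  have hm' : (ε / 2) • m ∈ U := by
    refine hball (mem_ball_iff_norm.2 ?_)
    calc ‖(ε / 2) • m - w‖ = ‖(ε / 2) • (m - (2 / ε) • w)‖ := by
          rw [smul_sub, smul_smul, show ε / 2 * (2 / ε) = 1 by field_simp, one_smul]
      _ = ε / 2 * ‖m - (2 / ε) • w‖ := by rw [norm_smul, Real.norm_of_nonneg (half_pos hε).le]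
      _ < ε := by nlinarith
  simpa [smul_smul, hε.ne'] using hcone (2 / ε) (by positivity) _ hm'

lemma linearIndependent_of_apply_eq_smul {K M : Type*} [Field K] [AddCommGroup M] [Module K M]
    {f : M →ₗ[K] M} {μ ν : K} (hμν : μ ≠ ν) {v w : M} (hv₀ : v ≠ 0) (hw₀ : w ≠ 0)
    (hv : f v = μ • v) (hw : f w = ν • w) : LinearIndependent K ![v, w] := by
  refine Module.End.eigenvectors_linearIndependent' f ![μ, ν] ?_ ![v, w] fun i => ?_
  · intro i j hij
    fin_cases i <;> fin_cases j <;> simp_all [eq_comm]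
  · fin_cases i
    · exact ⟨Module.End.mem_eigenspace_iff.2 hv, hv₀⟩
    · exact ⟨Module.End.mem_eigenspace_iff.2 hw, hw₀⟩

lemma exists_linearEquiv_coe_eq_actR {A : Matrix (Fin 2) (Fin 2) ℤ} (hA : IsUnit A.det) :
    ∃ T : V ≃ₗ[ℝ] V, ⇑T = actR A := by
  have hM : IsUnit (A.map (Int.cast : ℤ → ℝ)) := by
    rw [isUnit_iff_isUnit_det]
    have h := hA.map (Int.castRingHom ℝ)
    rwa [RingHom.map_det] at h
  exact ⟨LinearEquiv.ofBijective (A.map Int.cast).mulVecLin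
    ⟨mulVec_injective_iff_isUnit.2 hM, mulVec_surjective_iff_isUnit.2 hM⟩, rfl⟩

section Frame

variable {vs vu : V} (hli : LinearIndependent ℝ ![vs, vu])

noncomputable def frame : (ℝ × ℝ) ≃L[ℝ] V :=
  ((LinearEquiv.finTwoArrow ℝ ℝ).symm.trans
    (basisOfLinearIndependentOfCardEqFinrank hli (by simp)).equivFun.symm).toContinuousLinearEquiv

lemma frame_apply (c : ℝ × ℝ) : frame hli c = c.1 • vs + c.2 • vu := by
  simp [frame, Fin.sum_univ_two]

lemma exists_frame_mem_lattice_of_isOpen {U : Set (ℝ × ℝ)} (hU : IsOpen U)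
    (hcone : ∀ t : ℝ, 0 < t → ∀ c ∈ U, t • c ∈ U) (hne : U.Nonempty) :
    ∃ c ∈ U, frame hli c ∈ lattice := by
  obtain ⟨m, hm, hmU⟩ := exists_mem_lattice_of_isOpen_of_smul_mem
    (hU.preimage (frame hli).symm.continuous)
    (fun t ht v hv => by simpa only [mem_preimage, map_smul] using hcone t ht _ hv)
    ((frame hli).symm.surjective.nonempty_preimage.2 hne)
  exact ⟨(frame hli).symm m, hmU, by simpa using hm⟩

noncomputable def boxRect {a b : ℝ × ℝ} (h₁ : a.1 < b.1) (h₂ : a.2 < b.2) : Rect :=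
  ⟨frame hli a, b.1 - a.1, b.2 - a.2, sub_pos.2 h₁, sub_pos.2 h₂⟩

section BoxRect

variable {a b : ℝ × ℝ} (h₁ : a.1 < b.1) (h₂ : a.2 < b.2)

lemma carrier_boxRect :
    (boxRect hli h₁ h₂).carrier vs vu = frame hli '' Icc a.1 b.1 ×ˢ Icc a.2 b.2 := by
  ext q
  simp only [Rect.carrier, boxRect, mem_image, mem_prod, mem_Icc, frame_apply]
  constructor
  · rintro ⟨s, t, hs₀, hs, ht₀, ht, rfl⟩
    refine ⟨(a.1 + s, a.2 + t), ⟨⟨?_, ?_⟩, ?_, ?_⟩, ?_⟩ <;> try linarith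
    simp only [add_smul]
    abel
  · rintro ⟨c, ⟨⟨hc₁, hc₁'⟩, hc₂, hc₂'⟩, rfl⟩
    refine ⟨c.1 - a.1, c.2 - a.2, ?_, ?_, ?_, ?_, ?_⟩ <;> try linarith
    simp only [sub_smul]
    abel

lemma incEnd_boxRect : (boxRect hli h₁ h₂).incEnd vs vu = frame hli b := by
  simp only [Rect.incEnd, boxRect, frame_apply, sub_smul]
  abel

lemma decOrigin_boxRect : (boxRect hli h₁ h₂).decOrigin vs = frame hli (b.1, a.2) := by
  simp only [Rect.decOrigin, boxRect, frame_apply, sub_smul]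
  abel

lemma decEnd_boxRect : (boxRect hli h₁ h₂).decEnd vu = frame hli (a.1, b.2) := by
  simp only [Rect.decEnd, boxRect, frame_apply, sub_smul]
  abel

end BoxRect

lemma inter_Icc_prod_nonempty_of_isPos {X Y : Set V}
    (h : ∀ R : Rect, R.IsPos vs vu X → (R.carrier vs vu ∩ Y).Nonempty) {x₁ x₂ : ℝ × ℝ}
    (hx₁ : frame hli x₁ ∈ X) (hx₂ : frame hli x₂ ∈ X) (h₁ : x₁.1 < x₂.1) (h₂ : x₁.2 < x₂.2) :
    (frame hli ⁻¹' Y ∩ Icc x₁.1 x₂.1 ×ˢ Icc x₁.2 x₂.2).Nonempty := by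
  obtain ⟨_, hq, hqY⟩ := h (boxRect hli h₁ h₂) ⟨hx₁, by rwa [incEnd_boxRect]⟩
  rw [carrier_boxRect] at hq
  obtain ⟨c, hc, rfl⟩ := hq
  exact ⟨c, hqY, hc⟩

lemma inter_Icc_prod_nonempty_of_isNeg {X Y : Set V}
    (h : ∀ R : Rect, R.IsNeg vs vu Y → ¬Disjoint (R.carrier vs vu) X) {y₁ y₂ : ℝ × ℝ}
    (hy₁ : frame hli y₁ ∈ Y) (hy₂ : frame hli y₂ ∈ Y) (h₁ : y₁.1 < y₂.1) (h₂ : y₂.2 < y₁.2) :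
    (frame hli ⁻¹' X ∩ Icc y₁.1 y₂.1 ×ˢ Icc y₂.2 y₁.2).Nonempty := by
  obtain ⟨_, hq, hqX⟩ := not_disjoint_iff.1 (h (boxRect hli (a := (y₁.1, y₂.2))
    (b := (y₂.1, y₁.2)) h₁ h₂) ⟨by rwa [decOrigin_boxRect], by rwa [decEnd_boxRect]⟩)
  rw [carrier_boxRect] at hq
  obtain ⟨c, hc, rfl⟩ := hq
  exact ⟨c, hqX, hc⟩

lemma IsTorusFinite.frame_add_mem {E : Set V} (hE : IsTorusFinite E) {x c : ℝ × ℝ}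
    (hx : frame hli x ∈ E) (hc : frame hli c ∈ lattice) : frame hli (x + c) ∈ E := by
  rw [map_add]
  exact hE.add_mem hx hc

lemma IsTorusFinite.exists_neg_pair {E : Set V} (hE : IsTorusFinite E) (hne : E.Nonempty) :
    ∃ y₁ ∈ frame hli ⁻¹' E, ∃ y₂ ∈ frame hli ⁻¹' E, y₁.1 < y₂.1 ∧ y₂.2 < y₁.2 := by
  obtain ⟨c, ⟨hc₁, hc₂⟩, hc⟩ := exists_frame_mem_lattice_of_isOpen hli (isOpen_Iio.prod isOpen_Ioi)
    (fun t ht c hc => ⟨mul_neg_of_pos_of_neg ht hc.1, mul_pos ht hc.2⟩)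
    ⟨(-1, 1), by norm_num, by norm_num⟩
  obtain ⟨y, hy⟩ := hne
  refine ⟨(frame hli).symm y + c, hE.frame_add_mem hli (by simpa using hy) hc,
    (frame hli).symm y, by simpa using hy, ?_, ?_⟩ <;> simpa

lemma injOn_snd_preimage_frame {E : Set V} (hE : IsTorusFinite E) {f : V →ₗ[ℝ] V}
    (hf : MapsTo f E E) {μ : ℝ} (hμ₀ : 0 < μ) (hμ₁ : μ < 1) (hvs : f vs = μ • vs) :
    InjOn Prod.snd (frame hli ⁻¹' E) := by
  intro p hp q hq hpq
  refine (frame hli).injective (hE.eq_of_sub_eq_smul hf hμ₀ hμ₁ hvs hp hq (c := p.1 - q.1) ?_)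
  rw [frame_apply, frame_apply, hpq, sub_smul]
  abel

lemma injOn_fst_preimage_frame {E : Set V} (hE : IsTorusFinite E) {f : V →ₗ[ℝ] V}
    (hf : MapsTo f E E) {μ : ℝ} (hμ₀ : 0 < μ) (hμ₁ : μ < 1) (hvu : f vu = μ • vu) :
    InjOn Prod.fst (frame hli ⁻¹' E) := by
  intro p hp q hq hpq
  refine (frame hli).injective (hE.eq_of_sub_eq_smul hf hμ₀ hμ₁ hvu hp hq (c := p.2 - q.2) ?_)
  rw [frame_apply, frame_apply, hpq, sub_smul]
  abel

section Eigen

variable {A : Matrix (Fin 2) (Fin 2) ℤ} {lam : ℝ}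

lemma actR_frame (hAs : actR A vs = lam⁻¹ • vs) (hAu : actR A vu = lam • vu) (c : ℝ × ℝ) :
    actR A (frame hli c) = frame hli (lam⁻¹ * c.1, lam * c.2) := by
  change A.map Int.cast *ᵥ frame hli c = _
  rw [frame_apply, frame_apply, mulVec_add, mulVec_smul, mulVec_smul]
  change c.1 • actR A vs + c.2 • actR A vu = _
  rw [hAs, hAu, smul_smul, smul_smul, mul_comm c.1, mul_comm c.2]

lemma iterate_actR_frame (hAs : actR A vs = lam⁻¹ • vs) (hAu : actR A vu = lam • vu) (n : ℕ)
    (c : ℝ × ℝ) :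
    (actR A)^[n] (frame hli c) = frame hli (lam⁻¹ ^ n * c.1, lam ^ n * c.2) := by
  induction n with
  | zero => simp
  | succ n ih => rw [iterate_succ_apply', ih, actR_frame hli hAs hAu, pow_succ', pow_succ',
      mul_assoc, mul_assoc]

lemma exists_frame_mem_lattice_thin (hAs : actR A vs = lam⁻¹ • vs) (hAu : actR A vu = lam • vu)
    (hlam : 1 < lam) {δ : ℝ} (hδ : 0 < δ) :
    ∃ c : ℝ × ℝ, frame hli c ∈ lattice ∧ 0 < c.1 ∧ c.1 < δ ∧ 0 < c.2 := by
  obtain ⟨c, ⟨hc₁, hc₂⟩, hc⟩ := exists_frame_mem_lattice_of_isOpen hli (isOpen_Ioi.prod isOpen_Ioi)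
    (fun t ht c hc => ⟨mul_pos ht hc.1, mul_pos ht hc.2⟩) ⟨(1, 1), by norm_num, by norm_num⟩
  have hlam₀ : 0 < lam := zero_lt_one.trans hlam
  obtain ⟨n, hn⟩ := exists_pow_lt_of_lt_one (div_pos hδ hc₁) (inv_lt_one_of_one_lt₀ hlam)
  refine ⟨(lam⁻¹ ^ n * c.1, lam ^ n * c.2), ?_, mul_pos (pow_pos (inv_pos.2 hlam₀) n) hc₁,
    (lt_div_iff₀ hc₁).1 hn, mul_pos (pow_pos hlam₀ n) hc₂⟩
  rw [← iterate_actR_frame hli hAs hAu]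
  exact (mapsTo_actR_lattice A).iterate n hc

lemma IsTorusFinite.exists_thin {E : Set V} (hE : IsTorusFinite E)
    (hAs : actR A vs = lam⁻¹ • vs) (hAu : actR A vu = lam • vu) (hlam : 1 < lam) :
    ∀ x ∈ frame hli ⁻¹' E, ∀ δ > 0,
      ∃ x' ∈ frame hli ⁻¹' E, x.1 < x'.1 ∧ x'.1 < x.1 + δ ∧ x.2 < x'.2 := by
  intro x hx δ hδ
  obtain ⟨c, hc, hc₁, hcδ, hc₂⟩ := exists_frame_mem_lattice_thin hli hAs hAu hlam hδ
  refine ⟨x + c, hE.frame_add_mem hli hx hc, ?_, ?_, ?_⟩ <;> simp <;> linarith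

end Eigen

end Frame

theorem statement_4_general (A : Matrix (Fin 2) (Fin 2) ℤ) (hdet : A.det = 1)
    (lam : ℝ) (hlam : 1 < lam) (vs vu : V) (hvs : vs ≠ 0) (hvu : vu ≠ 0)
    (hAs : actR A vs = lam⁻¹ • vs) (hAu : actR A vu = lam • vu)
    (X Y : Set V) (hXY : Disjoint X Y) (hYne : Y.Nonempty)
    (hXfin : IsTorusFinite X) (hXinv : IsInvariant A X)
    (hYfin : IsTorusFinite Y) (hYinv : IsInvariant A Y)
    (h : ∀ R : Rect, R.IsPos vs vu X → (R.carrier vs vu ∩ Y).Nonempty) :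
    ∃ R : Rect, R.IsNeg vs vu Y ∧ Disjoint (R.carrier vs vu) X := by
  by_contra! hneg
  obtain ⟨T, hT⟩ := exists_linearEquiv_coe_eq_actR (hdet ▸ isUnit_one)
  have hlam₀ : 0 < lam := zero_lt_one.trans hlam
  have hTs : T vs = lam⁻¹ • vs := hT ▸ hAs
  have hTu : T vu = lam • vu := hT ▸ hAu
  have hT'u : T.symm vu = lam⁻¹ • vu := by
    rw [T.symm_apply_eq, map_smul, hTu, smul_smul, inv_mul_cancel₀ hlam₀.ne', one_smul]
  have hli := linearIndependent_of_apply_eq_smul (f := T.toLinearMap)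
    ((inv_lt_one_of_one_lt₀ hlam).trans hlam).ne hvs hvu hTs hTu
  have hE := hXfin.union hYfin
  have hTE : T '' (X ∪ Y) = X ∪ Y := by rw [image_union, hT, hXinv, hYinv]
  have hTmaps : MapsTo T (X ∪ Y) (X ∪ Y) := fun x hx => hTE ▸ mem_image_of_mem T hx
  have hT'maps : MapsTo T.symm (X ∪ Y) (X ∪ Y) := by
    intro x hx
    rw [← hTE] at hx
    obtain ⟨y, hy, rfl⟩ := hx
    rwa [T.symm_apply_apply]
  exact false_of_forall_pos_forall_neg (hXY.preimage _)
    (injOn_fst_preimage_frame hli hE hT'maps (inv_pos.2 hlam₀)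
      (inv_lt_one_of_one_lt₀ hlam) hT'u)
    (injOn_snd_preimage_frame hli hE hTmaps (inv_pos.2 hlam₀)
      (inv_lt_one_of_one_lt₀ hlam) hTs)
    (fun _ => hXfin.finite_preimage_inter _) (fun _ => hYfin.finite_preimage_inter _)
    (hXfin.exists_thin hli hAs hAu hlam)
    (fun _ hx₁ _ hx₂ => inter_Icc_prod_nonempty_of_isPos hli h hx₁ hx₂)
    (fun _ hy₁ _ hy₂ => inter_Icc_prod_nonempty_of_isNeg hli hneg hy₁ hy₂)
    (hYfin.exists_neg_pair hli hYne)

/-- if every positive `𝒳`-rectangle contains a point of `𝒴̃`, then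
there exists a negative `𝒴`-rectangle disjoint from `𝒳̃`. -/
theorem statement_4 (A : Matrix (Fin 2) (Fin 2) ℤ) (hdet : A.det = 1) (htr : 2 < A.trace)
    (lam : ℝ) (hlam : 1 < lam) (vs vu : V) (hvs : vs ≠ 0) (hvu : vu ≠ 0)
    (hAs : actR A vs = lam⁻¹ • vs) (hAu : actR A vu = lam • vu)
    (X Y : Set V) (hXY : Disjoint X Y) (hXne : X.Nonempty) (hYne : Y.Nonempty)
    (hXfin : IsTorusFinite X) (hXinv : IsInvariant A X)
    (hYfin : IsTorusFinite Y) (hYinv : IsInvariant A Y)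
    (h : ∀ R : Rect, R.IsPos vs vu X → (R.carrier vs vu ∩ Y).Nonempty) :
    ∃ R : Rect, R.IsNeg vs vu Y ∧ Disjoint (R.carrier vs vu) X :=
  statement_4_general A hdet lam hlam vs vu hvs hvu hAs hAu X Y hXY hYne hXfin hXinv hYfin hYinv h

end Paper
end

section
/- Let A be a 2×2 integer matrix with determinant 1 and trace > 2, and let ℰ ⊆ 𝕋² be a periodic orbit of f_A. If there exists a positive (resp. negative) ℰ-rectangle whose increasing (resp. decreasing) diagonal has origin x for some x ∈ ℰ̃, then for every y ∈ ℰ̃ there exists a positive (resp. negative) ℰ-rectangle whose increasing (resp. decreasing) diagonal has origin y. -/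
/- Common setup: following the paper, we identify each subset of the torus
`𝕋² = ℝ²/ℤ²` with its (`ℤ²`-saturated) lift to `ℝ²`. -/

open Matrix Set
open scoped Pointwise

/-! The map `v ↦ A^k v + m` with `m ∈ ℤ²` lifts `f_A^k`, so it preserves `ℰ̃`, and it sends
`R(p; s, u)` to `R(A^k p + m; λ⁻ᵏ s, λᵏ u)`, matching the origins and endpoints of both diagonals.
Any two points of a periodic orbit are related by some iterate of `f_A`; choosing `k` and `m`
accordingly moves a positive (negative) `ℰ`-rectangle so that the origin of its increasing
(decreasing) diagonal lands on any prescribed point of `ℰ̃`. -/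

theorem Function.IsPeriodicPt.exists_iterate_iterate_eq {α : Type*} {f : α → α} {p : ℕ}
    {z : α} (hz : Function.IsPeriodicPt f p z) (hp : 0 < p) (i j : ℕ) :
    ∃ k, f^[k] (f^[i] z) = f^[j] z := by
  refine ⟨j + (p - 1) * i, ?_⟩
  have hpi : (p - 1) * i + i = p * i := by
    rw [← Nat.succ_mul, Nat.succ_eq_add_one, Nat.sub_add_cancel hp]
  rw [← Function.iterate_add_apply, add_assoc, hpi, Function.iterate_add_apply,
    (hz.mul_const i).eq]

theorem LinearMap.iterate_smul_of_apply_eq_smul {R M : Type*} [CommSemiring R]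
    [AddCommMonoid M] [Module R M] {f : M →ₗ[R] M} {μ : R} {v : M} (hv : f v = μ • v)
    (k : ℕ) (t : R) : f^[k] (t • v) = (t * μ ^ k) • v := by
  have hconj : Function.Semiconj (· • v) (· * μ) f := fun t => by
    simp only [map_smul, hv, smul_smul]
  simpa only [mul_right_iterate] using (hconj.iterate_right k t).symm

namespace Paper

def actRLin (A : Matrix (Fin 2) (Fin 2) ℤ) : V →ₗ[ℝ] V :=
  (A.map (Int.cast : ℤ → ℝ)).mulVecLin

theorem coe_actRLin (A : Matrix (Fin 2) (Fin 2) ℤ) : ⇑(actRLin A) = actR A := rfl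

theorem iterate_actR_add_smul {A : Matrix (Fin 2) (Fin 2) ℤ} (k : ℕ) {μ : ℝ} {v : V}
    (hv : actR A v = μ • v) (q : V) (t : ℝ) :
    (actR A)^[k] (q + t • v) = (actR A)^[k] q + (t * μ ^ k) • v := by
  rw [← coe_actRLin, iterate_map_add, LinearMap.iterate_smul_of_apply_eq_smul hv]

section Torus

def latticeSubgroup : AddSubgroup V := ((Int.castAddHom ℝ).compLeft (Fin 2)).range

abbrev Torus : Type := V ⧸ latticeSubgroup

theorem Torus.mk_eq_mk_iff {v w : V} : (v : Torus) = w ↔ v - w ∈ lattice :=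
  QuotientAddGroup.eq_iff_sub_mem

theorem Torus.mk_add_of_mem_lattice (v : V) {m : V} (hm : m ∈ lattice) :
    ((v + m : V) : Torus) = v :=
  Torus.mk_eq_mk_iff.2 (by rwa [add_sub_cancel_left])

theorem actR_mem_lattice (A : Matrix (Fin 2) (Fin 2) ℤ) {m : V} (hm : m ∈ lattice) :
    actR A m ∈ lattice := by
  obtain ⟨n, rfl⟩ := hm
  exact ⟨A.mulVec n, funext fun i => by simp [actR, Matrix.mulVec, dotProduct]⟩

/-- The automorphism `f_A` of the torus. -/
def torusMap (A : Matrix (Fin 2) (Fin 2) ℤ) : Torus →+ Torus :=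
  QuotientAddGroup.map _ _ (actRLin A).toAddMonoidHom fun _ hm => actR_mem_lattice A hm

theorem Torus.semiconj_mk_torusMap (A : Matrix (Fin 2) (Fin 2) ℤ) :
    Function.Semiconj ((↑) : V → Torus) (actR A) (torusMap A) :=
  fun _ => rfl

theorem Torus.mk_iterate_actR (A : Matrix (Fin 2) (Fin 2) ℤ) (k : ℕ) (v : V) :
    (((actR A)^[k] v : V) : Torus) = (torusMap A)^[k] v :=
  (Torus.semiconj_mk_torusMap A).iterate_right k v

variable {A : Matrix (Fin 2) (Fin 2) ℤ} {E : Set V}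

theorem IsPeriodicOrbit.exists_isPeriodicPt_torusMap (hE : IsPeriodicOrbit A E) :
    ∃ z : Torus, ∃ p, 0 < p ∧ Function.IsPeriodicPt (torusMap A) p z ∧
      ∀ v, v ∈ E ↔ ∃ i, (v : Torus) = (torusMap A)^[i] z := by
  obtain ⟨x₀, p, hp, hper, rfl⟩ := hE
  refine ⟨x₀, p, hp, ?_, fun v => ?_⟩
  · rw [Function.IsPeriodicPt, Function.IsFixedPt, ← Torus.mk_iterate_actR]
    exact Torus.mk_eq_mk_iff.2 hper
  · simp only [Set.mem_ofPred_eq, ← Torus.mk_iterate_actR, Torus.mk_eq_mk_iff]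

theorem IsPeriodicOrbit.exists_sub_iterate_mem_lattice (hE : IsPeriodicOrbit A E) {x y : V}
    (hx : x ∈ E) (hy : y ∈ E) : ∃ k, y - (actR A)^[k] x ∈ lattice := by
  obtain ⟨z, p, hp, hz, hmem⟩ := hE.exists_isPeriodicPt_torusMap
  obtain ⟨i, hi⟩ := (hmem x).1 hx
  obtain ⟨j, hj⟩ := (hmem y).1 hy
  obtain ⟨k, hk⟩ := hz.exists_iterate_iterate_eq hp i j
  exact ⟨k, Torus.mk_eq_mk_iff.1 (by rw [Torus.mk_iterate_actR, hi, hj, hk])⟩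

theorem IsPeriodicOrbit.iterate_add_mem (hE : IsPeriodicOrbit A E) {x : V} (hx : x ∈ E)
    (k : ℕ) {m : V} (hm : m ∈ lattice) : (actR A)^[k] x + m ∈ E := by
  obtain ⟨z, -, -, -, hmem⟩ := hE.exists_isPeriodicPt_torusMap
  obtain ⟨i, hi⟩ := (hmem x).1 hx
  refine (hmem _).2 ⟨k + i, ?_⟩
  rw [Torus.mk_add_of_mem_lattice _ hm, Torus.mk_iterate_actR, hi, Function.iterate_add_apply]

end Torus

namespace Rect

/-- The image of `R` under the lift `v ↦ A^k v + m` of `f_A^k`. -/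
noncomputable def iterateMap (A : Matrix (Fin 2) (Fin 2) ℤ) {lam : ℝ} (hlam : 0 < lam) (k : ℕ)
    (m : V) (R : Rect) : Rect where
  p := (actR A)^[k] R.p + m
  s := R.s * lam⁻¹ ^ k
  u := R.u * lam ^ k
  s_pos := mul_pos R.s_pos (pow_pos (inv_pos.2 hlam) k)
  u_pos := mul_pos R.u_pos (pow_pos hlam k)

variable {A : Matrix (Fin 2) (Fin 2) ℤ} {lam : ℝ} {vs vu : V}
  (hlam : 0 < lam) (k : ℕ) (m : V) (R : Rect)

theorem decOrigin_iterateMap (hAs : actR A vs = lam⁻¹ • vs) :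
    (R.iterateMap A hlam k m).decOrigin vs = (actR A)^[k] (R.decOrigin vs) + m := by
  simp only [decOrigin, iterateMap, iterate_actR_add_smul k hAs]
  abel

theorem decEnd_iterateMap (hAu : actR A vu = lam • vu) :
    (R.iterateMap A hlam k m).decEnd vu = (actR A)^[k] (R.decEnd vu) + m := by
  simp only [decEnd, iterateMap, iterate_actR_add_smul k hAu]
  abel

theorem incEnd_iterateMap (hAs : actR A vs = lam⁻¹ • vs) (hAu : actR A vu = lam • vu) :
    (R.iterateMap A hlam k m).incEnd vs vu = (actR A)^[k] (R.incEnd vs vu) + m := by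
  simp only [incEnd, iterateMap, iterate_actR_add_smul k hAs, iterate_actR_add_smul k hAu]
  abel

variable {hlam k m R} {E : Set V}

theorem IsPos.iterateMap (hAs : actR A vs = lam⁻¹ • vs) (hAu : actR A vu = lam • vu)
    (hE : ∀ v ∈ E, (actR A)^[k] v + m ∈ E) (hR : R.IsPos vs vu E) :
    (R.iterateMap A hlam k m).IsPos vs vu E :=
  ⟨hE _ hR.1, incEnd_iterateMap hlam k m R hAs hAu ▸ hE _ hR.2⟩

theorem IsNeg.iterateMap (hAs : actR A vs = lam⁻¹ • vs) (hAu : actR A vu = lam • vu)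
    (hE : ∀ v ∈ E, (actR A)^[k] v + m ∈ E) (hR : R.IsNeg vs vu E) :
    (R.iterateMap A hlam k m).IsNeg vs vu E :=
  ⟨decOrigin_iterateMap hlam k m R hAs ▸ hE _ hR.1,
    decEnd_iterateMap hlam k m R hAu ▸ hE _ hR.2⟩

end Rect

theorem statement_5_general (A : Matrix (Fin 2) (Fin 2) ℤ)
    (lam : ℝ) (hlam : 1 < lam) (vs vu : V)
    (hAs : actR A vs = lam⁻¹ • vs) (hAu : actR A vu = lam • vu)
    (E : Set V) (hE : IsPeriodicOrbit A E) :
    ((∃ x ∈ E, ∃ R : Rect, R.IsPos vs vu E ∧ R.p = x) →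
        ∀ y ∈ E, ∃ R : Rect, R.IsPos vs vu E ∧ R.p = y) ∧
    ((∃ x ∈ E, ∃ R : Rect, R.IsNeg vs vu E ∧ R.decOrigin vs = x) →
        ∀ y ∈ E, ∃ R : Rect, R.IsNeg vs vu E ∧ R.decOrigin vs = y) := by
  have hlam₀ : 0 < lam := zero_lt_one.trans hlam
  have hmove : ∀ k {m}, m ∈ lattice → ∀ v ∈ E, (actR A)^[k] v + m ∈ E :=
    fun k _ hm _ hv => hE.iterate_add_mem hv k hm
  refine ⟨?_, ?_⟩
  · rintro ⟨x, hx, R, hR, rfl⟩ y hy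
    obtain ⟨k, hk⟩ := hE.exists_sub_iterate_mem_lattice hx hy
    exact ⟨R.iterateMap A hlam₀ k _, hR.iterateMap hAs hAu (hmove k hk), add_sub_cancel _ _⟩
  · rintro ⟨x, hx, R, hR, rfl⟩ y hy
    obtain ⟨k, hk⟩ := hE.exists_sub_iterate_mem_lattice hx hy
    exact ⟨R.iterateMap A hlam₀ k _, hR.iterateMap hAs hAu (hmove k hk),
      by rw [Rect.decOrigin_iterateMap hlam₀ k _ R hAs, add_sub_cancel]⟩

/-- for a periodic orbit `ℰ`, if some positive (resp. negative)
`ℰ`-rectangle has the origin of its increasing (resp. decreasing) diagonal at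
some `x ∈ ℰ̃`, then every `y ∈ ℰ̃` is the origin of the increasing (resp.
decreasing) diagonal of some positive (resp. negative) `ℰ`-rectangle. -/
theorem statement_5 (A : Matrix (Fin 2) (Fin 2) ℤ) (hdet : A.det = 1) (htr : 2 < A.trace)
    (lam : ℝ) (hlam : 1 < lam) (vs vu : V) (hvs : vs ≠ 0) (hvu : vu ≠ 0)
    (hAs : actR A vs = lam⁻¹ • vs) (hAu : actR A vu = lam • vu)
    (E : Set V) (hE : IsPeriodicOrbit A E) :
    ((∃ x ∈ E, ∃ R : Rect, R.IsPos vs vu E ∧ R.p = x) →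
        ∀ y ∈ E, ∃ R : Rect, R.IsPos vs vu E ∧ R.p = y) ∧
    ((∃ x ∈ E, ∃ R : Rect, R.IsNeg vs vu E ∧ R.decOrigin vs = x) →
        ∀ y ∈ E, ∃ R : Rect, R.IsNeg vs vu E ∧ R.decOrigin vs = y) :=
  statement_5_general A lam hlam vs vu hAs hAu E hE

end Paper
end
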